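/- arXiv:0809.3517 — 4 statements merged into one kernel-verified Lean document; each statement's English description precedes it below -/
import Mathlib

section
/- Let A and B be two elements of a unital complex Banach algebra. Then exp(A+B) = lim_{N→∞} ( exp(A/N) · (1 + B/N) )^N, where the limit is taken in the norm topology. -/
open Filter NormedSpace
open scoped Nat

section helpers

variable {ℬ : Type*} [NormedRing ℬ] [NormOneClass ℬ] [NormedAlgebra ℂ ℬ] [CompleteSpace ℬ]

lemma mlpf_norm_exp_le (x : ℬ) : ‖exp x‖ ≤ Real.exp ‖x‖ := by
  rw [exp_eq_tsum ℂ, Real.exp_eq_exp_ℝ, exp_eq_tsum_div]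
  refine (norm_tsum_le_tsum_norm (norm_expSeries_summable' x)).trans ?_
  refine Summable.tsum_le_tsum (fun n => ?_) (norm_expSeries_summable' x)
    (Real.summable_pow_div_factorial ‖x‖)
  rw [norm_smul, norm_inv, Complex.norm_natCast, div_eq_inv_mul]
  exact mul_le_mul_of_nonneg_left (norm_pow_le x n) (by positivity)

lemma mlpf_norm_exp_sub_le (x : ℬ) :
    ‖exp x - 1 - x‖ ≤ ‖x‖ ^ 2 * Real.exp ‖x‖ := by
  have h := exp_series_hasSum_exp' (𝕂 := ℂ) x
  have h2 : HasSum (fun n => ((Nat.factorial (n + 2) : ℂ)⁻¹ • x ^ (n + 2)))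
      (exp x - 1 - x) := by
    have := (hasSum_nat_add_iff' (f := fun n => ((Nat.factorial n : ℂ)⁻¹ • x ^ n)) 2).mpr h
    simpa [Finset.sum_range_succ, sub_sub] using this
  rw [← h2.tsum_eq]
  have hsum : Summable fun n : ℕ => ‖x‖ ^ 2 * (‖x‖ ^ n / n !) :=
    (Real.summable_pow_div_factorial ‖x‖).mul_left _
  have hbound : ∀ n : ℕ, ‖((Nat.factorial (n + 2) : ℂ)⁻¹ • x ^ (n + 2))‖
      ≤ ‖x‖ ^ 2 * (‖x‖ ^ n / n !) := by
    intro n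
    rw [norm_smul, norm_inv, Complex.norm_natCast]
    calc ((Nat.factorial (n + 2) : ℝ))⁻¹ * ‖x ^ (n + 2)‖
        ≤ ((n !) : ℝ)⁻¹ * ‖x‖ ^ (n + 2) := by
          refine mul_le_mul ?_ (norm_pow_le x (n + 2)) (norm_nonneg _) (by positivity)
          refine inv_anti₀ (by positivity) ?_
          exact_mod_cast Nat.factorial_le (by omega)
      _ = ‖x‖ ^ 2 * (‖x‖ ^ n / n !) := by ring
  refine (norm_tsum_le_tsum_norm ?_).trans ?_
  · exact Summable.of_nonneg_of_le (fun n => norm_nonneg _) hbound hsum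
  · refine le_trans (Summable.tsum_le_tsum hbound
      (Summable.of_nonneg_of_le (fun n => norm_nonneg _) hbound hsum) hsum) ?_
    rw [tsum_mul_left, Real.exp_eq_exp_ℝ, exp_eq_tsum_div]

lemma mlpf_norm_pow_sub_pow_le (x y : ℬ) {M : ℝ} (hx : ‖x‖ ≤ M) (hy : ‖y‖ ≤ M) :
    ∀ n : ℕ, ‖x ^ (n + 1) - y ^ (n + 1)‖ ≤ (n + 1) * M ^ n * ‖x - y‖ := by
  have hM : 0 ≤ M := (norm_nonneg x).trans hx
  intro n
  induction n with
  | zero => simp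
  | succ n ih =>
    have key : x ^ (n + 2) - y ^ (n + 2)
        = (x - y) * x ^ (n + 1) + y * (x ^ (n + 1) - y ^ (n + 1)) := by
      rw [pow_succ' x (n + 1), pow_succ' y (n + 1)]
      noncomm_ring
    calc ‖x ^ (n + 2) - y ^ (n + 2)‖
        ≤ ‖(x - y) * x ^ (n + 1)‖ + ‖y * (x ^ (n + 1) - y ^ (n + 1))‖ := by
          rw [key]; exact norm_add_le _ _
      _ ≤ ‖x - y‖ * M ^ (n + 1) + M * ((n + 1) * M ^ n * ‖x - y‖) := by
          gcongr
          · exact norm_mul_le _ _ |>.trans (by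
              gcongr
              exact (norm_pow_le x (n + 1)).trans (pow_le_pow_left₀ (norm_nonneg x) hx _))
          · exact norm_mul_le _ _ |>.trans (by gcongr)
      _ = ((n : ℝ) + 1 + 1) * M ^ (n + 1) * ‖x - y‖ := by ring
      _ = ((n + 1 : ℕ) + 1) * M ^ (n + 1) * ‖x - y‖ := by push_cast; ring

theorem mlpf_key (A B : ℬ) :
    Tendsto (fun N : ℕ =>
        (exp ((N : ℂ)⁻¹ • A) * (1 + (N : ℂ)⁻¹ • B)) ^ N)
      atTop (nhds (exp (A + B))) := by
  rw [← tendsto_sub_nhds_zero_iff]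
  set K := ‖A‖ + ‖B‖ with hK
  set C := ‖A‖ * ‖B‖ + ‖A‖ ^ 2 * Real.exp ‖A‖ * (1 + ‖B‖) + K ^ 2 * Real.exp K with hC
  refine squeeze_zero_norm' (a := fun N : ℕ => Real.exp K * C / N) ?_
    (tendsto_const_div_atTop_nhds_zero_nat _)
  filter_upwards [eventually_ge_atTop 1] with N hN
  obtain ⟨n, rfl⟩ : ∃ n, N = n + 1 := ⟨N - 1, by omega⟩
  set N := n + 1
  have hν : (1 : ℝ) ≤ (N : ℝ) := by exact_mod_cast hN
  have hν0 : (0 : ℝ) < (N : ℝ) := by linarith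
  set a := ((N : ℂ))⁻¹ • A with ha
  set b := ((N : ℂ))⁻¹ • B with hb
  have hna : ‖a‖ = ‖A‖ / N := by
    rw [ha, norm_smul, norm_inv, Complex.norm_natCast, div_eq_inv_mul]
  have hnb : ‖b‖ = ‖B‖ / N := by
    rw [hb, norm_smul, norm_inv, Complex.norm_natCast, div_eq_inv_mul]
  have hnab : ‖a + b‖ ≤ K / N := by
    refine (norm_add_le a b).trans ?_
    rw [hna, hnb, hK, add_div]
  have hK0 : 0 ≤ K := by positivity
  set S := exp (a + b) with hS
  set T := exp a * (1 + b) with hT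
  have hSN : exp (A + B) = S ^ N := by
    let +nondep : NormedAlgebra ℚ ℬ := .restrictScalars ℚ ℂ ℬ
    rw [hS, ← exp_nsmul]
    congr 1
    rw [← smul_add, ← Nat.cast_smul_eq_nsmul ℂ, smul_smul, mul_inv_cancel₀, one_smul]
    exact Nat.cast_ne_zero.mpr (Nat.succ_ne_zero n)
  set M := Real.exp (K / N) with hM
  have hM1 : 1 ≤ M := Real.one_le_exp (by positivity)
  have hTle : ‖T‖ ≤ M := by
    calc ‖T‖ ≤ ‖exp a‖ * ‖1 + b‖ := norm_mul_le _ _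
      _ ≤ Real.exp ‖a‖ * (‖b‖ + 1) := by
          refine mul_le_mul (mlpf_norm_exp_le a) ?_ (norm_nonneg _) (Real.exp_nonneg _)
          refine (norm_add_le _ _).trans ?_
          rw [norm_one]; linarith
      _ ≤ Real.exp (‖A‖ / N) * Real.exp (‖B‖ / N) := by
          refine mul_le_mul ?_ ?_ (by positivity) (Real.exp_nonneg _)
          · rw [hna]
          · rw [hnb]; exact Real.add_one_le_exp _
      _ = M := by rw [hM, ← Real.exp_add, hK, add_div]
  have hSle : ‖S‖ ≤ M := by
    refine (mlpf_norm_exp_le _).trans ?_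
    rw [hM]
    exact Real.exp_le_exp.mpr hnab
  have hTS : ‖T - S‖ ≤ C / (N : ℝ) ^ 2 := by
    set ra := exp a - 1 - a with hra
    set rc := exp (a + b) - 1 - (a + b) with hrc
    have e1 : exp a = ra + 1 + a := by rw [hra]; abel
    have e2 : S = rc + 1 + (a + b) := by rw [hS, hrc]; abel
    have key : T - S = a * b + ra * (1 + b) - rc := by
      rw [hT, e1, e2]; noncomm_ring
    have h1 : ‖T - S‖ ≤ ‖a‖ * ‖b‖ + ‖ra‖ * (1 + ‖b‖) + ‖rc‖ := by
      rw [key]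
      refine (norm_sub_le _ _).trans ?_
      gcongr
      refine (norm_add_le _ _).trans ?_
      gcongr
      · exact norm_mul_le _ _
      · refine (norm_mul_le _ _).trans ?_
        gcongr
        refine (norm_add_le _ _).trans ?_
        rw [norm_one]
    have hra_le : ‖ra‖ ≤ (‖A‖ / N) ^ 2 * Real.exp ‖A‖ := by
      refine (mlpf_norm_exp_sub_le a).trans ?_
      rw [hna]
      gcongr
      rw [div_le_iff₀ hν0]
      nlinarith [norm_nonneg A]
    have hrc_le : ‖rc‖ ≤ (K / N) ^ 2 * Real.exp K := by
      refine (mlpf_norm_exp_sub_le (a + b)).trans ?_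
      have h0' : ‖a + b‖ ≤ K := hnab.trans (by rw [div_le_iff₀ hν0]; nlinarith)
      exact mul_le_mul (pow_le_pow_left₀ (norm_nonneg _) hnab 2)
        (Real.exp_le_exp.mpr h0') (Real.exp_nonneg _) (by positivity)
    have hb_le : ‖b‖ ≤ ‖B‖ := by
      rw [hnb, div_le_iff₀ hν0]
      nlinarith [norm_nonneg B]
    calc ‖T - S‖ ≤ ‖a‖ * ‖b‖ + ‖ra‖ * (1 + ‖b‖) + ‖rc‖ := h1
      _ ≤ (‖A‖ / N) * (‖B‖ / N) + ((‖A‖ / N) ^ 2 * Real.exp ‖A‖) * (1 + ‖B‖)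
          + (K / N) ^ 2 * Real.exp K := by
          refine add_le_add (add_le_add (le_of_eq (by rw [hna, hnb]))
            (mul_le_mul hra_le (by linarith) (by positivity) (by positivity))) hrc_le
      _ = C / (N : ℝ) ^ 2 := by rw [hC]; field_simp
  have hcast : (N : ℝ) = (n : ℝ) + 1 := by push_cast [N]; ring
  have hpow : ‖T ^ N - S ^ N‖ ≤ (N : ℝ) * M ^ n * ‖T - S‖ := by
    rw [hcast]
    exact mlpf_norm_pow_sub_pow_le T S hTle hSle n
  have hMn : M ^ n ≤ Real.exp K := by
    calc M ^ n ≤ M ^ N := pow_le_pow_right₀ hM1 (by omega)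
      _ = Real.exp ((N : ℝ) * (K / N)) := by rw [Real.exp_nat_mul]
      _ = Real.exp K := by rw [mul_div_cancel₀ _ (ne_of_gt hν0)]
  calc ‖T ^ N - exp (A + B)‖ = ‖T ^ N - S ^ N‖ := by rw [hSN]
    _ ≤ (N : ℝ) * M ^ n * ‖T - S‖ := hpow
    _ ≤ (N : ℝ) * Real.exp K * (C / (N : ℝ) ^ 2) := by
        have hC0 : (0 : ℝ) ≤ C / (N : ℝ) ^ 2 := by
          have : (0:ℝ) ≤ C := by positivity
          positivity
        exact mul_le_mul (mul_le_mul le_rfl hMn (by positivity) hν0.le) hTS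
          (norm_nonneg _) (by positivity)
    _ = Real.exp K * C / N := by field_simp

end helpers

/-- Modified Lie product formula: for elements `A`, `B` of a unital complex Banach algebra,
`exp (A + B) = lim_{N → ∞} (exp (A / N) * (1 + B / N))^N` in the norm topology. -/
theorem modified_lie_product_formula
    {𝒜 : Type*} [NormedRing 𝒜] [NormedAlgebra ℂ 𝒜] [CompleteSpace 𝒜]
    (A B : 𝒜) :
    Tendsto (fun N : ℕ =>
        (exp ((N : ℂ)⁻¹ • A) * (1 + (N : ℂ)⁻¹ • B)) ^ N)
      atTop (nhds (exp (A + B))) := by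
  rcases subsingleton_or_nontrivial 𝒜 with h | h
  · have : ∀ N : ℕ, (exp ((N : ℂ)⁻¹ • A) * (1 + (N : ℂ)⁻¹ • B)) ^ N = exp (A + B) :=
      fun N => Subsingleton.elim _ _
    simpa [this] using tendsto_const_nhds
  · set Φ : 𝒜 →ₐ[ℂ] (𝒜 →L[ℂ] 𝒜) :=
      AlgHom.ofLinearMap (ContinuousLinearMap.mul ℂ 𝒜).toLinearMap
        (by ext; simp) (fun x y => by ext z; simp [mul_assoc]) with hΦ
    have hΦcont : Continuous Φ := (ContinuousLinearMap.mul ℂ 𝒜).continuous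
    let +nondep : NormedAlgebra ℚ 𝒜 := .restrictScalars ℚ ℂ 𝒜
    let +nondep : NormedAlgebra ℚ (𝒜 →L[ℂ] 𝒜) := .restrictScalars ℚ ℂ (𝒜 →L[ℂ] 𝒜)
    have hkey := mlpf_key (Φ A) (Φ B)
    have heq : ∀ N : ℕ,
        (exp ((N : ℂ)⁻¹ • Φ A) * (1 + (N : ℂ)⁻¹ • Φ B)) ^ N
          = Φ ((exp ((N : ℂ)⁻¹ • A) * (1 + (N : ℂ)⁻¹ • B)) ^ N) := by
      intro N
      rw [map_pow, map_mul, map_exp Φ hΦcont, map_add, map_one, map_smul, map_smul]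
    rw [← map_add, ← map_exp Φ hΦcont] at hkey
    simp only [heq] at hkey
    have h2 := ((ContinuousLinearMap.apply ℂ 𝒜 (1 : 𝒜)).continuous.tendsto _).comp hkey
    have h3 : ∀ y : 𝒜, (ContinuousLinearMap.apply ℂ 𝒜 (1 : 𝒜)) (Φ y) = y := fun y => by
      simp [hΦ]
    simp only [Function.comp_def, h3] at h2
    exact h2
end

section
/- Let R be a (not necessarily commutative) unital ring, u ∈ R, and N ≥ 1, and assume that 1 + u^N is invertible in R. Define the N×N matrix Q over R by Q_{m,n} = δ_{m,n}·1 − δ_{m−1,n}·u + δ_{m,1}δ_{n,N}·u (i.e. identity on the diagonal, −u on the first subdiagonal, and an extra entry +u in position (1,N)). Define the N×N matrix S over R by S_{m,n} = u^{m−n}·(1+u^N)^{−1} if m ≥ n and S_{m,n} = −u^{N+m−n}·(1+u^N)^{−1} if m < n. Then Q·S = 1 and S·Q = 1. -/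
private lemma sum_ite_eq_of_iff {α : Type*} [AddCommMonoid α] {N : ℕ}
    (p : Fin N → Prop) [DecidablePred p] (f : Fin N → α) (j : Fin N)
    (hp : ∀ k, p k ↔ k = j) :
    ∑ k : Fin N, (if p k then f k else 0) = f j := by
  have h : ∀ k : Fin N, k ∈ Finset.univ → (if p k then f k else 0) = if k = j then f k else 0 := by
    intro k _; simp [hp k]
  rw [Finset.sum_congr rfl h, Finset.sum_ite_eq' Finset.univ j f]
  simp

private lemma sum_ite_eq_zero' {α : Type*} [AddCommMonoid α] {N : ℕ}
    (p : Fin N → Prop) [DecidablePred p] (f : Fin N → α)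
    (hp : ∀ k, ¬ p k) :
    ∑ k : Fin N, (if p k then f k else 0) = 0 := by
  simp [hp]

/-- The antiperiodic time-discretization matrix `Q` (identity on the diagonal, `-u` on the
first subdiagonal, and an extra `+u` in the corner position `(1,N)`) has the explicit
two-sided inverse `S_{m,n} = u^(m-n) (1+u^N)⁻¹` for `m ≥ n` and
`S_{m,n} = -(u^(N+m-n) (1+u^N)⁻¹)` for `m < n`, provided `1 + u^N` is invertible. -/
theorem antiperiodic_matrix_inverse {α : Type*} [Ring α] (u : α) (N : ℕ) (hN : 1 ≤ N)
    [Invertible (1 + u ^ N)]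
    (Q S : Matrix (Fin N) (Fin N) α)
    (hQ : ∀ m n : Fin N, Q m n =
      (if (m : ℕ) = (n : ℕ) then (1 : α) else 0)
        - (if (m : ℕ) = (n : ℕ) + 1 then u else 0)
        + (if (m : ℕ) = 0 ∧ (n : ℕ) = N - 1 then u else 0))
    (hS : ∀ m n : Fin N, S m n =
      if (n : ℕ) ≤ (m : ℕ) then u ^ ((m : ℕ) - (n : ℕ)) * ⅟(1 + u ^ N)
      else -(u ^ (N + (m : ℕ) - (n : ℕ)) * ⅟(1 + u ^ N))) :
    Q * S = 1 ∧ S * Q = 1 := by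
  set v := ⅟(1 + u ^ N) with hv
  have hcommu : Commute u (1 + u ^ N) :=
    (Commute.one_right u).add_right ((Commute.refl u).pow_right N)
  have hvu : v * u = u * v := (hcommu.invOf_right).symm.eq
  have hone : v + u ^ N * v = 1 := by
    rw [← one_mul v, ← mul_assoc, mul_one, ← add_mul, mul_invOf_self]
  have hpowL : ∀ i j : ℕ, i + 1 = j → u * (u ^ i * v) = u ^ j * v := by
    intro i j h; rw [← h, pow_succ', mul_assoc]
  have hpowR : ∀ i j : ℕ, i + 1 = j → (u ^ i * v) * u = u ^ j * v := by
    intro i j h; rw [mul_assoc, hvu, ← mul_assoc, ← pow_succ, h]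
  constructor
  · ext m n
    rw [Matrix.mul_apply, Matrix.one_apply]
    have expand : ∀ k : Fin N, Q m k * S k n =
        (if (m : ℕ) = (k : ℕ) then S k n else 0)
          - (if (m : ℕ) = (k : ℕ) + 1 then u * S k n else 0)
          + (if (m : ℕ) = 0 ∧ (k : ℕ) = N - 1 then u * S k n else 0) := by
      intro k
      rw [hQ]
      split_ifs <;> simp [add_mul, sub_mul]
    rw [Finset.sum_congr rfl (fun k _ => expand k)]
    rw [Finset.sum_add_distrib, Finset.sum_sub_distrib]
    have s1 : ∑ k : Fin N, (if (m : ℕ) = (k : ℕ) then S k n else 0) = S m n := by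
      apply sum_ite_eq_of_iff
      intro k; rw [Fin.ext_iff]; omega
    rw [s1]
    by_cases hm0 : (m : ℕ) = 0
    · have s2 : ∑ k : Fin N, (if (m : ℕ) = (k : ℕ) + 1 then u * S k n else 0) = 0 := by
        apply sum_ite_eq_zero'
        intro k; omega
      have hN1 : N - 1 < N := by omega
      have s3 : ∑ k : Fin N, (if (m : ℕ) = 0 ∧ (k : ℕ) = N - 1 then u * S k n else 0)
          = u * S ⟨N - 1, hN1⟩ n := by
        apply sum_ite_eq_of_iff
        intro k; simp [hm0, Fin.ext_iff]
      rw [s2, s3, sub_zero, hS, hS]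
      simp only [hm0, Fin.val_mk]
      have hn : (n : ℕ) < N := n.isLt
      by_cases hn0 : (n : ℕ) = 0
      · rw [if_pos (by omega), if_pos (by omega)]
        simp only [hn0, Nat.sub_zero, Nat.zero_sub, pow_zero, one_mul]
        rw [hpowL (N - 1) N (by omega), if_pos (by rw [Fin.ext_iff]; omega)]
        exact hone
      · rw [if_neg (by omega), if_pos (by omega),
          hpowL (N - 1 - (n : ℕ)) (N + 0 - (n : ℕ)) (by omega),
          if_neg (by rw [Fin.ext_iff]; omega)]
        abel
    · have hm1 : (m : ℕ) - 1 < N := by omega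
      have s2 : ∑ k : Fin N, (if (m : ℕ) = (k : ℕ) + 1 then u * S k n else 0)
          = u * S ⟨(m : ℕ) - 1, hm1⟩ n := by
        apply sum_ite_eq_of_iff
        intro k; rw [Fin.ext_iff]; simp; omega
      have s3 : ∑ k : Fin N, (if (m : ℕ) = 0 ∧ (k : ℕ) = N - 1 then u * S k n else 0) = 0 := by
        apply sum_ite_eq_zero'
        intro k; simp [hm0]
      rw [s2, s3, add_zero, hS, hS]
      simp only [Fin.val_mk]
      have hn : (n : ℕ) < N := n.isLt
      rcases lt_trichotomy (n : ℕ) (m : ℕ) with h | h | h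
      · rw [if_pos (by omega), if_pos (by omega),
          hpowL ((m : ℕ) - 1 - (n : ℕ)) ((m : ℕ) - (n : ℕ)) (by omega),
          if_neg (by omega)]
        abel
      · rw [if_pos (by omega), if_neg (by omega), mul_neg,
          hpowL (N + ((m : ℕ) - 1) - (n : ℕ)) N (by omega),
          if_pos (by rw [Fin.ext_iff]; omega)]
        simp only [h, Nat.sub_self, pow_zero, one_mul, sub_neg_eq_add]
        exact hone
      · rw [if_neg (by omega), if_neg (by omega), mul_neg,
          hpowL (N + ((m : ℕ) - 1) - (n : ℕ)) (N + (m : ℕ) - (n : ℕ)) (by omega),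
          if_neg (by omega)]
        abel
  · ext m n
    rw [Matrix.mul_apply, Matrix.one_apply]
    have expand : ∀ k : Fin N, S m k * Q k n =
        (if (k : ℕ) = (n : ℕ) then S m k else 0)
          - (if (k : ℕ) = (n : ℕ) + 1 then S m k * u else 0)
          + (if (k : ℕ) = 0 ∧ (n : ℕ) = N - 1 then S m k * u else 0) := by
      intro k
      rw [hQ]
      split_ifs <;> simp [mul_add, mul_sub]
    rw [Finset.sum_congr rfl (fun k _ => expand k)]
    rw [Finset.sum_add_distrib, Finset.sum_sub_distrib]
    have s1 : ∑ k : Fin N, (if (k : ℕ) = (n : ℕ) then S m k else 0) = S m n := by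
      apply sum_ite_eq_of_iff
      intro k; rw [Fin.ext_iff]
    rw [s1]
    have hn : (n : ℕ) < N := n.isLt
    have hm : (m : ℕ) < N := m.isLt
    by_cases hnl : (n : ℕ) = N - 1
    · have s2 : ∑ k : Fin N, (if (k : ℕ) = (n : ℕ) + 1 then S m k * u else 0) = 0 := by
        apply sum_ite_eq_zero'
        intro k; have := k.isLt; omega
      have h0 : (0 : ℕ) < N := by omega
      have s3 : ∑ k : Fin N, (if (k : ℕ) = 0 ∧ (n : ℕ) = N - 1 then S m k * u else 0)
          = S m ⟨0, h0⟩ * u := by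
        apply sum_ite_eq_of_iff
        intro k; rw [Fin.ext_iff]; simp [hnl]
      rw [s2, s3, sub_zero, hS, hS]
      simp only [Fin.val_mk]
      rw [if_pos (Nat.zero_le _), Nat.sub_zero]
      by_cases hab : (m : ℕ) = N - 1
      · rw [if_pos (by omega), hpowR (m : ℕ) N (by omega),
          if_pos (by rw [Fin.ext_iff]; omega)]
        have : (m : ℕ) - (n : ℕ) = 0 := by omega
        rw [this, pow_zero, one_mul]
        exact hone
      · rw [if_neg (by omega), hpowR (m : ℕ) (N + (m : ℕ) - (n : ℕ)) (by omega),
          if_neg (by rw [Fin.ext_iff]; omega)]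
        abel
    · have hb1 : (n : ℕ) + 1 < N := by omega
      have s2 : ∑ k : Fin N, (if (k : ℕ) = (n : ℕ) + 1 then S m k * u else 0)
          = S m ⟨(n : ℕ) + 1, hb1⟩ * u := by
        apply sum_ite_eq_of_iff
        intro k; rw [Fin.ext_iff]
      have s3 : ∑ k : Fin N, (if (k : ℕ) = 0 ∧ (n : ℕ) = N - 1 then S m k * u else 0) = 0 := by
        apply sum_ite_eq_zero'
        intro k; simp [hnl]
      rw [s2, s3, add_zero, hS, hS]
      simp only [Fin.val_mk]
      rcases lt_trichotomy (m : ℕ) (n : ℕ) with h | h | h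
      · rw [if_neg (by omega), if_neg (by omega), neg_mul,
          hpowR (N + (m : ℕ) - ((n : ℕ) + 1)) (N + (m : ℕ) - (n : ℕ)) (by omega),
          if_neg (by rw [Fin.ext_iff]; omega)]
        abel
      · rw [if_pos (by omega), if_neg (by omega), neg_mul,
          hpowR (N + (m : ℕ) - ((n : ℕ) + 1)) N (by omega),
          if_pos (by rw [Fin.ext_iff]; omega)]
        have : (m : ℕ) - (n : ℕ) = 0 := by omega
        rw [this, pow_zero, one_mul, sub_neg_eq_add]
        exact hone
      · rw [if_pos (by omega), if_pos (by omega),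
          hpowR ((m : ℕ) - ((n : ℕ) + 1)) ((m : ℕ) - (n : ℕ)) (by omega),
          if_neg (by rw [Fin.ext_iff]; omega)]
        abel
end

section
/- Let u be a d×d matrix with entries in a commutative ring (e.g. the complex numbers) and N ≥ 1. Let Q be the (N·d)×(N·d) block matrix with N×N block structure given by Q_{m,n} = δ_{m,n}·1_d − δ_{m−1,n}·u + δ_{m,1}δ_{n,N}·u (identity blocks on the diagonal, blocks −u on the first subdiagonal, and the block +u in the top-right corner (1,N)). Then det Q = det(1_d + u^N). -/
open Matrix Finset

namespace DetAntiAux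

variable {K : Type*} [CommRing K] {d N : ℕ}

/-- block entries of the lower-triangular elimination matrix -/
def Lb (u : Matrix (Fin d) (Fin d) K) (N : ℕ) (k n : Fin N) : Matrix (Fin d) (Fin d) K :=
  if (n : ℕ) ≤ (k : ℕ) then u ^ ((k : ℕ) - (n : ℕ)) else 0

/-- block entries of Q -/
def Qb (u : Matrix (Fin d) (Fin d) K) (N : ℕ) (m k : Fin N) : Matrix (Fin d) (Fin d) K :=
  (if (m : ℕ) = (k : ℕ) then 1 else 0) - (if (m : ℕ) = (k : ℕ) + 1 then u else 0)
    + (if (m : ℕ) = 0 ∧ (k : ℕ) = N - 1 then u else 0)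

/-- block entries of the product Q * L -/
def Eb (u : Matrix (Fin d) (Fin d) K) (N : ℕ) (m n : Fin N) : Matrix (Fin d) (Fin d) K :=
  if (m : ℕ) = 0 then (if (n : ℕ) = 0 then 1 else 0) + u ^ (N - (n : ℕ))
  else if (m : ℕ) = (n : ℕ) then 1 else 0

lemma key (u : Matrix (Fin d) (Fin d) K) (m n : Fin N) :
    ∑ k, Qb u N m k * Lb u N k n = Eb u N m n := by
  simp only [Qb, sub_mul, add_mul, ite_mul, one_mul, zero_mul, Finset.sum_add_distrib,
    Finset.sum_sub_distrib]
  have h1 : ∑ k : Fin N, (if (m : ℕ) = (k : ℕ) then Lb u N k n else 0) = Lb u N m n := by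
    rw [Fintype.sum_eq_single m (fun k hk => if_neg (fun h => hk (Fin.ext h.symm)))]
    exact if_pos rfl
  rw [h1]
  by_cases hm0 : (m : ℕ) = 0
  · have h2 : ∑ k : Fin N, (if (m : ℕ) = (k : ℕ) + 1 then u * Lb u N k n else 0) = 0 := by
      apply Finset.sum_eq_zero
      intro k _
      exact if_neg (by omega)
    have hNlt : N - 1 < N := by omega
    have h3 : ∑ k : Fin N, (if (m : ℕ) = 0 ∧ (k : ℕ) = N - 1 then u * Lb u N k n else 0)
        = u * Lb u N ⟨N - 1, hNlt⟩ n := by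
      rw [Fintype.sum_eq_single (⟨N - 1, hNlt⟩ : Fin N)
        (fun k hk => if_neg (fun h => hk (Fin.ext h.2)))]
      exact if_pos ⟨hm0, rfl⟩
    rw [h2, h3, Eb, if_pos hm0, Lb, Lb]
    have hn : (n : ℕ) ≤ N - 1 := by omega
    rw [if_pos hn]
    have hpow : u * u ^ (N - 1 - (n : ℕ)) = u ^ (N - (n : ℕ)) := by
      rw [← pow_succ']
      congr 1
      omega
    rw [hpow]
    by_cases hn0 : (n : ℕ) = 0
    · rw [if_pos (by omega : (n:ℕ) ≤ (m:ℕ)), if_pos hn0]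
      have : (m : ℕ) - (n : ℕ) = 0 := by omega
      rw [this, pow_zero, sub_zero]
    · rw [if_neg (by omega : ¬ (n:ℕ) ≤ (m:ℕ)), if_neg hn0, sub_zero, zero_add]
  · -- m ≥ 1
    obtain ⟨M, hM⟩ : ∃ M, (m : ℕ) = M + 1 := ⟨(m : ℕ) - 1, by omega⟩
    have hMlt : M < N := by have := m.2; omega
    have h2 : ∑ k : Fin N, (if (m : ℕ) = (k : ℕ) + 1 then u * Lb u N k n else 0)
        = u * Lb u N ⟨M, hMlt⟩ n := by
      rw [Fintype.sum_eq_single (⟨M, hMlt⟩ : Fin N)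
        (fun k hk => if_neg (fun h => hk (Fin.ext (by simp at h ⊢; omega))))]
      exact if_pos (by simp [hM])
    have h3 : ∑ k : Fin N, (if (m : ℕ) = 0 ∧ (k : ℕ) = N - 1 then u * Lb u N k n else 0) = 0 := by
      apply Finset.sum_eq_zero
      intro k _
      exact if_neg (fun h => hm0 h.1)
    rw [h2, h3, Eb, if_neg hm0, add_zero, Lb, Lb]
    by_cases hnM : (n : ℕ) ≤ M
    · rw [if_pos (by omega : (n:ℕ) ≤ (m:ℕ)), if_pos hnM,
        if_neg (by omega : ¬ (m:ℕ) = (n:ℕ))]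
      have hpow : u * u ^ (M - (n : ℕ)) = u ^ ((m : ℕ) - (n : ℕ)) := by
        rw [← pow_succ']
        congr 1
        omega
      rw [hpow, sub_self]
    · rw [if_neg (by omega : ¬ (n:ℕ) ≤ (M:ℕ)), mul_zero, sub_zero]
      by_cases hmn : (m : ℕ) = (n : ℕ)
      · rw [if_pos hmn, if_pos (by omega : (n:ℕ) ≤ (m:ℕ))]
        have : (m : ℕ) - (n : ℕ) = 0 := by omega
        rw [this, pow_zero]
      · rw [if_neg hmn, if_neg (by omega : ¬ (n:ℕ) ≤ (m:ℕ))]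

/-- determinant of a square block extracted from a single block row/column -/
lemma det_block (M : Matrix (Fin N × Fin d) (Fin N × Fin d) K) (b : Fin N × Fin d → ℕ)
    (a : ℕ) (m₀ : Fin N) (h : ∀ p : Fin N × Fin d, b p = a ↔ p.1 = m₀)
    (B : Matrix (Fin d) (Fin d) K)
    (hM : ∀ p q : Fin N × Fin d, p.1 = m₀ → q.1 = m₀ → M p q = B p.2 q.2) :
    (M.toSquareBlock b a).det = B.det := by
  let e : {p : Fin N × Fin d // b p = a} ≃ Fin d :=
    { toFun := fun p => p.1.2
      invFun := fun i => ⟨(m₀, i), (h _).2 rfl⟩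
      left_inv := fun p => by
        ext
        · exact congrArg Fin.val ((h _).1 p.2).symm
        · rfl
      right_inv := fun i => rfl }
  have he : M.toSquareBlock b a = B.submatrix e e := by
    ext p q
    exact hM _ _ ((h _).1 p.2) ((h _).1 q.2)
  rw [he, Matrix.det_submatrix_equiv_self]

end DetAntiAux

open DetAntiAux in
/-- Determinant of the antiperiodic block time-discretization matrix: if `Q` is the
`(N·d) × (N·d)` block matrix with identity blocks on the diagonal, blocks `-u` on the
first subdiagonal and the block `+u` in the top-right corner, then
`det Q = det (1 + u^N)`. -/
theorem det_antiperiodic_block_matrix {K : Type*} [CommRing K] (d N : ℕ) (hN : 1 ≤ N)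
    (u : Matrix (Fin d) (Fin d) K)
    (Q : Matrix (Fin N × Fin d) (Fin N × Fin d) K)
    (hQ : ∀ (m n : Fin N) (i j : Fin d), Q (m, i) (n, j) =
      (if (m : ℕ) = (n : ℕ) then (1 : Matrix (Fin d) (Fin d) K) i j else 0)
        - (if (m : ℕ) = (n : ℕ) + 1 then u i j else 0)
        + (if (m : ℕ) = 0 ∧ (n : ℕ) = N - 1 then u i j else 0)) :
    Q.det = (1 + u ^ N).det := by
  rcases Nat.eq_zero_or_pos d with hd | hd
  · subst hd
    haveI : IsEmpty (Fin N × Fin 0) := by infer_instance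
    simp [Matrix.det_isEmpty]
  -- define L and E
  set L : Matrix (Fin N × Fin d) (Fin N × Fin d) K :=
    fun p q => Lb u N p.1 q.1 p.2 q.2 with hL
  set E : Matrix (Fin N × Fin d) (Fin N × Fin d) K :=
    fun p q => Eb u N p.1 q.1 p.2 q.2 with hE
  -- Q as blocks
  have hQb : ∀ (m n : Fin N) (i j : Fin d), Q (m, i) (n, j) = Qb u N m n i j := by
    intro m n i j
    rw [hQ]
    simp [Qb, Matrix.sub_apply, Matrix.add_apply, apply_ite (fun M : Matrix (Fin d) (Fin d) K => M i j)]
  -- the product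
  have hmul : Q * L = E := by
    ext ⟨m, i⟩ ⟨n, j⟩
    rw [Matrix.mul_apply, Fintype.sum_prod_type]
    have : ∀ k : Fin N, ∑ t : Fin d, Q (m, i) (k, t) * L (k, t) (n, j)
        = (Qb u N m k * Lb u N k n) i j := by
      intro k
      rw [Matrix.mul_apply]
      exact Finset.sum_congr rfl fun t _ => by rw [hQb]
    simp only [this]
    rw [← Matrix.sum_apply, key u m n]
  -- det L = 1
  have hLtri : L.BlockTriangular (fun p => N - (p.1 : ℕ)) := by
    intro p q hpq
    have hpq' : N - (q.1 : ℕ) < N - (p.1 : ℕ) := hpq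
    have : (p.1 : ℕ) < (q.1 : ℕ) := by
      have := p.1.2; have := q.1.2; omega
    simp only [hL, Lb]
    rw [if_neg (by omega)]
    rfl
  have hLdet : L.det = 1 := by
    rw [hLtri.det]
    apply Finset.prod_eq_one
    intro a ha
    obtain ⟨p₀, _, hp₀⟩ := Finset.mem_image.1 ha
    have ha' : ∀ p : Fin N × Fin d, N - (p.1 : ℕ) = a ↔ p.1 = p₀.1 := by
      intro p
      constructor
      · intro h; apply Fin.ext; have := p.1.2; have := p₀.1.2; omega
      · intro h; rw [h]; exact hp₀
    rw [det_block L _ a p₀.1 ha' 1]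
    · exact Matrix.det_one
    · intro p q hp hq
      simp [hL, Lb, hp, hq]
  -- det E
  have hEtri : E.BlockTriangular (fun p => (p.1 : ℕ)) := by
    intro p q hpq
    have hpq' : (q.1 : ℕ) < (p.1 : ℕ) := hpq
    simp only [hE, Eb]
    rw [if_neg (by omega), if_neg (by omega)]
    rfl
  have hEdet : E.det = (1 + u ^ N).det := by
    rw [hEtri.det]
    have h0 : (0 : ℕ) ∈ Finset.univ.image (fun p : Fin N × Fin d => (p.1 : ℕ)) := by
      apply Finset.mem_image.2
      exact ⟨(⟨0, hN⟩, ⟨0, hd⟩), Finset.mem_univ _, rfl⟩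
    rw [Finset.prod_eq_single_of_mem 0 h0]
    · have ha' : ∀ p : Fin N × Fin d, (p.1 : ℕ) = 0 ↔ p.1 = ⟨0, hN⟩ := by
        intro p; constructor
        · intro h; exact Fin.ext h
        · intro h; rw [h]
      rw [det_block E _ 0 ⟨0, hN⟩ ha' (1 + u ^ N)]
      intro p q hp hq
      simp only [hE, Eb, hp, hq]
      simp [Matrix.add_apply]
    · intro a ha haneq
      obtain ⟨p₀, _, hp₀⟩ := Finset.mem_image.1 ha
      have ha' : ∀ p : Fin N × Fin d, (p.1 : ℕ) = a ↔ p.1 = p₀.1 := by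
        intro p; constructor
        · intro h; apply Fin.ext; omega
        · intro h; rw [h]; exact hp₀
      rw [det_block E _ a p₀.1 ha' 1]
      · exact Matrix.det_one
      · intro p q hp hq
        have h1 : ¬ ((p₀.1 : ℕ) = 0) := by omega
        simp [hE, Eb, hp, hq, h1]
  -- conclude
  calc Q.det = Q.det * L.det := by rw [hLdet, mul_one]
    _ = (Q * L).det := (Matrix.det_mul _ _).symm
    _ = E.det := by rw [hmul]
    _ = (1 + u ^ N).det := hEdet
end

section
/- Let 𝒜 be a unital complex Banach algebra, N ≥ 1, c ≥ 0, and let a_1, …, a_N ∈ 𝒜 satisfy ‖a_k‖ ≤ c for all k. Then ‖ ∏_{k=1}^N exp(−a_k) − ∏_{k=1}^N (1 − a_k) ‖ ≤ N · c² · e^{N c}, where both products are taken in order of increasing index k. -/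
open NormedSpace

section Aux

variable {𝒜 : Type*} [NormedRing 𝒜] [NormOneClass 𝒜] [NormedAlgebra ℂ 𝒜] [CompleteSpace 𝒜]

lemma real_exp_eq_tsum (c : ℝ) : Real.exp c = ∑' n : ℕ, ((n.factorial : ℝ)⁻¹) * c ^ n := by
  rw [Real.exp_eq_exp_ℝ, NormedSpace.exp_eq_tsum ℝ]
  simp [smul_eq_mul]

lemma term_le {x : 𝒜} {c : ℝ} (hc : 0 ≤ c) (hx : ‖x‖ ≤ c) (n : ℕ) :
    ‖((n.factorial : ℂ)⁻¹) • x ^ n‖ ≤ ((n.factorial : ℝ)⁻¹) * c ^ n := by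
  rw [norm_smul]
  have h1 : ‖((n.factorial : ℂ)⁻¹)‖ = ((n.factorial : ℝ)⁻¹) := by
    rw [norm_inv]; norm_num
  rw [h1]
  have h2 : ‖x ^ n‖ ≤ c ^ n := (norm_pow_le x n).trans (by gcongr)
  gcongr

lemma real_summable (c : ℝ) : Summable fun n : ℕ => ((n.factorial : ℝ)⁻¹) * c ^ n := by
  have := NormedSpace.expSeries_summable' (𝕂 := ℝ) (x := c)
  simpa [smul_eq_mul] using this

/-- `‖exp x‖ ≤ exp ‖x‖ ≤ exp c`. -/
lemma norm_exp_le {x : 𝒜} {c : ℝ} (hc : 0 ≤ c) (hx : ‖x‖ ≤ c) :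
    ‖exp x‖ ≤ Real.exp c := by
  rw [NormedSpace.exp_eq_tsum ℂ, real_exp_eq_tsum]
  refine (norm_tsum_le_tsum_norm (NormedSpace.norm_expSeries_summable' (𝕂 := ℂ) x)).trans ?_
  exact Summable.tsum_le_tsum (term_le hc hx) (NormedSpace.norm_expSeries_summable' (𝕂 := ℂ) x) (real_summable c)

omit [CompleteSpace 𝒜] in
lemma norm_list_prod_le_pow (f : ℕ → 𝒜) (B : ℝ) (L : List ℕ)
    (hf : ∀ k ∈ L, ‖f k‖ ≤ B) : ‖(L.map f).prod‖ ≤ B ^ L.length := by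
  induction L with
  | nil => simp
  | cons x l ih =>
    have hB : 0 ≤ B := le_trans (norm_nonneg _) (hf x (by simp))
    calc ‖((x :: l).map f).prod‖ = ‖f x * (l.map f).prod‖ := by simp
      _ ≤ ‖f x‖ * ‖(l.map f).prod‖ := norm_mul_le _ _
      _ ≤ B * B ^ l.length := by
          gcongr
          · exact hf x (by simp)
          · exact ih (fun k hk => hf k (by simp [hk]))
      _ = B ^ (x :: l).length := by simp [pow_succ, mul_comm]

omit [CompleteSpace 𝒜] in
lemma norm_list_prod_sub_prod_le (f g : ℕ → 𝒜) (B ε : ℝ) (hB : 0 ≤ B) (hε : 0 ≤ ε)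
    (L : List ℕ) (hf : ∀ k ∈ L, ‖f k‖ ≤ B) (hg : ∀ k ∈ L, ‖g k‖ ≤ B)
    (hfg : ∀ k ∈ L, ‖f k - g k‖ ≤ ε) :
    ‖(L.map f).prod - (L.map g).prod‖ ≤ L.length * ε * B ^ (L.length - 1) := by
  induction L with
  | nil => simp
  | cons x l ih =>
    have hfl : ∀ k ∈ l, ‖f k‖ ≤ B := fun k hk => hf k (by simp [hk])
    have hgl : ∀ k ∈ l, ‖g k‖ ≤ B := fun k hk => hg k (by simp [hk])
    have hfgl : ∀ k ∈ l, ‖f k - g k‖ ≤ ε := fun k hk => hfg k (by simp [hk])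
    have key : ((x :: l).map f).prod - ((x :: l).map g).prod =
        (f x - g x) * (l.map f).prod + g x * ((l.map f).prod - (l.map g).prod) := by
      simp only [List.map_cons, List.prod_cons]
      noncomm_ring
    calc ‖((x :: l).map f).prod - ((x :: l).map g).prod‖
        ≤ ‖(f x - g x) * (l.map f).prod‖ + ‖g x * ((l.map f).prod - (l.map g).prod)‖ := by
          rw [key]; exact norm_add_le _ _
      _ ≤ ‖f x - g x‖ * ‖(l.map f).prod‖ + ‖g x‖ * ‖(l.map f).prod - (l.map g).prod‖ := by
          gcongr <;> exact norm_mul_le _ _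
      _ ≤ ε * B ^ l.length + B * (l.length * ε * B ^ (l.length - 1)) := by
          gcongr
          · exact hfg x (by simp)
          · exact norm_list_prod_le_pow f B l hfl
          · exact hg x (by simp)
          · exact ih hfl hgl hfgl
      _ ≤ (x :: l).length * ε * B ^ ((x :: l).length - 1) := by
          simp only [List.length_cons, Nat.add_sub_cancel]
          rcases Nat.eq_zero_or_pos l.length with h0 | hpos
          · simp [h0]
          · have hBB : B * B ^ (l.length - 1) = B ^ l.length := by
              rw [← pow_succ']; congr 1; omega
            have h3 : B * (↑l.length * ε * B ^ (l.length - 1)) = ↑l.length * ε * B ^ l.length := by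
              rw [← hBB]; ring
            rw [h3]
            push_cast
            nlinarith [pow_nonneg hB l.length, show (0:ℝ) ≤ (l.length:ℝ) from Nat.cast_nonneg _]

lemma norm_exp_neg_sub_one_sub {x : 𝒜} {c : ℝ} (hc : 0 ≤ c) (hx : ‖x‖ ≤ c) :
    ‖exp (-x) - (1 - x)‖ ≤ c ^ 2 * Real.exp c := by
  have hnx : ‖-x‖ ≤ c := by simpa
  set f : ℕ → 𝒜 := fun n => ((n.factorial : ℂ)⁻¹) • (-x) ^ n with hf
  have hsum : Summable f := NormedSpace.expSeries_summable' (-x)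
  have h2 : exp (-x) = (1 - x) + ∑' n, f (n + 2) := by
    have he : exp (-x) = ∑' n, f n := by rw [NormedSpace.exp_eq_tsum ℂ]
    rw [he, ← Summable.sum_add_tsum_nat_add 2 hsum]
    congr 1
    simp [hf, Finset.sum_range_succ, sub_eq_add_neg]
  rw [h2, add_sub_cancel_left]
  have hsumtail : Summable fun n => ‖f (n + 2)‖ :=
    (summable_nat_add_iff 2).2 (NormedSpace.norm_expSeries_summable' (-x))
  have hbd : ∀ n : ℕ, ‖f (n + 2)‖ ≤ c ^ 2 * (((n.factorial : ℝ)⁻¹) * c ^ n) := by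
    intro n
    calc ‖f (n + 2)‖ ≤ (((n + 2).factorial : ℝ)⁻¹) * c ^ (n + 2) := term_le hc hnx (n + 2)
      _ ≤ ((n.factorial : ℝ)⁻¹) * c ^ (n + 2) := by
          apply mul_le_mul_of_nonneg_right _ (by positivity)
          exact inv_anti₀ (by positivity) (by exact_mod_cast Nat.factorial_le (by omega))
      _ = c ^ 2 * (((n.factorial : ℝ)⁻¹) * c ^ n) := by ring
  calc ‖∑' n, f (n + 2)‖ ≤ ∑' n, ‖f (n + 2)‖ := norm_tsum_le_tsum_norm hsumtail
    _ ≤ ∑' n : ℕ, c ^ 2 * (((n.factorial : ℝ)⁻¹) * c ^ n) :=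
        Summable.tsum_le_tsum hbd hsumtail ((real_summable c).mul_left _)
    _ = c ^ 2 * Real.exp c := by rw [tsum_mul_left, real_exp_eq_tsum]

end Aux

/-- Reexponentiation bound: if `‖a k‖ ≤ c` for `k = 1, …, N`, then
`‖∏_{k=1}^N exp (-a_k) - ∏_{k=1}^N (1 - a_k)‖ ≤ N * c^2 * exp (N * c)`,
both products taken in order of increasing index. -/
theorem norm_prod_exp_sub_prod_one_sub_le
    {𝒜 : Type*} [NormedRing 𝒜] [NormOneClass 𝒜] [NormedAlgebra ℂ 𝒜] [CompleteSpace 𝒜]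
    (N : ℕ) (hN : 1 ≤ N) (c : ℝ) (hc : 0 ≤ c) (a : ℕ → 𝒜)
    (ha : ∀ k ∈ Finset.range N, ‖a k‖ ≤ c) :
    ‖((List.range N).map (fun k => exp (-(a k)))).prod -
        ((List.range N).map (fun k => 1 - a k)).prod‖ ≤
      (N : ℝ) * c ^ 2 * Real.exp (N * c) := by
  have ha' : ∀ k ∈ List.range N, ‖a k‖ ≤ c := by
    intro k hk
    exact ha k (Finset.mem_range.2 (List.mem_range.1 hk))
  have hB : (0 : ℝ) ≤ Real.exp c := (Real.exp_pos c).le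
  have hε : (0 : ℝ) ≤ c ^ 2 * Real.exp c := by positivity
  have key := norm_list_prod_sub_prod_le (fun k => exp (-(a k))) (fun k => 1 - a k)
    (Real.exp c) (c ^ 2 * Real.exp c) hB hε (List.range N)
    (fun k hk => norm_exp_le hc (by simpa using ha' k hk))
    (fun k hk => by
      calc ‖(1 : 𝒜) - a k‖ ≤ ‖(1 : 𝒜)‖ + ‖a k‖ := norm_sub_le _ _
        _ ≤ 1 + c := by rw [norm_one]; linarith [ha' k hk]
        _ ≤ Real.exp c := by linarith [Real.add_one_le_exp c])
    (fun k hk => norm_exp_neg_sub_one_sub hc (ha' k hk))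
  rw [List.length_range] at key
  refine key.trans (le_of_eq ?_)
  have h1 : Real.exp c * Real.exp c ^ (N - 1) = Real.exp c ^ N := by
    rw [← pow_succ']; congr 1; omega
  rw [Real.exp_nat_mul]
  calc (N : ℝ) * (c ^ 2 * Real.exp c) * Real.exp c ^ (N - 1)
      = (N : ℝ) * c ^ 2 * (Real.exp c * Real.exp c ^ (N - 1)) := by ring
    _ = (N : ℝ) * c ^ 2 * Real.exp c ^ N := by rw [h1]
end
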